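/- arXiv:1202.1261 — 5 statements merged into one kernel-verified Lean document; each statement's English description precedes it below -/
import Mathlib

section
/- Let σ ⊆ ℚⁿ be a pointed polyhedral cone and Δ₁, Δ₂ two σ-polyhedra. If h_{Δ₁}(m) = h_{Δ₂}(m) for all lattice points m ∈ σ∨ ∩ ℤⁿ lying in the relative interior of σ∨, then Δ₁ = Δ₂. -/
open scoped Pointwise
open Finset

namespace Paper

/-- Standard pairing on `ℚⁿ`. -/
def dot {n : ℕ} (m v : Fin n → ℚ) : ℚ := ∑ i, m i * v i

/-- Dual cone `σ∨ = {m | ∀ v ∈ σ, ⟨m,v⟩ ≥ 0}`. -/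
def dualCone {n : ℕ} (σ : Set (Fin n → ℚ)) : Set (Fin n → ℚ) :=
  {m | ∀ v ∈ σ, 0 ≤ dot m v}

/-- A polyhedral cone: the cone generated by finitely many vectors. -/
def IsPolyhedralCone {n : ℕ} (σ : Set (Fin n → ℚ)) : Prop :=
  ∃ (k : ℕ) (g : Fin k → Fin n → ℚ),
    σ = {v | ∃ c : Fin k → ℚ, (∀ i, 0 ≤ c i) ∧ v = ∑ i, c i • g i}

/-- A pointed (strongly convex) cone contains no line. -/
def Pointed {n : ℕ} (σ : Set (Fin n → ℚ)) : Prop := ∀ v ∈ σ, -v ∈ σ → v = 0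

/-- The canonical embedding `ℤⁿ → ℚⁿ`. -/
def Lq {n : ℕ} (m : Fin n → ℤ) : Fin n → ℚ := fun i => (m i : ℚ)

/-- A rational vector is a lattice point if all coordinates are integers. -/
def IsLatticePt {n : ℕ} (v : Fin n → ℚ) : Prop := ∀ i, ∃ z : ℤ, v i = (z : ℚ)

/-- A `σ`-polyhedron: Minkowski sum of a (nonempty) polytope with the cone `σ`. -/
def IsSigmaPolyhedron {n : ℕ} (σ Δ : Set (Fin n → ℚ)) : Prop :=
  ∃ F : Finset (Fin n → ℚ), F.Nonempty ∧ Δ = convexHull ℚ (↑F : Set (Fin n → ℚ)) + σ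

/-- An integral `σv`-polyhedron: Minkowski sum of a lattice polytope with `σv`. -/
def IsIntegralPoly {n : ℕ} (σv P : Set (Fin n → ℚ)) : Prop :=
  ∃ F : Finset (Fin n → ℤ), F.Nonempty ∧ P = convexHull ℚ (Lq '' (↑F : Set (Fin n → ℤ))) + σv

/-- The `e`-fold Minkowski sum `eP` of `P`, with the convention `0P = σv`. -/
def mink {n : ℕ} (σv P : Set (Fin n → ℚ)) : ℕ → Set (Fin n → ℚ)
  | 0 => σv
  | 1 => P
  | (e + 2) => mink σv P (e + 1) + P

/-- The semigroup `σ∨ ∩ ℤⁿ` of lattice points of the dual cone. -/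
def latticeDual {n : ℕ} (σ : Set (Fin n → ℚ)) : AddSubmonoid (Fin n → ℤ) where
  carrier := {m | Lq m ∈ dualCone σ}
  zero_mem' := by
    intro v hv
    simp [dot, Lq]
  add_mem' := by
    intro a b ha hb v hv
    have h1 := ha v hv
    have h2 := hb v hv
    have h : dot (Lq (a + b)) v = dot (Lq a) v + dot (Lq b) v := by
      simp only [dot, Lq, Pi.add_apply]
      rw [← Finset.sum_add_distrib]
      apply Finset.sum_congr rfl
      intro i _
      push_cast
      ring
    rw [Set.mem_setOf_eq] at *
    simpa [dualCone, h] using add_nonneg h1 h2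

/-- The monomial `χ^m` in the semigroup algebra `k[σ∨ ∩ ℤⁿ]`. -/
noncomputable def mono (k : Type*) [CommRing k] {n : ℕ} (σ : Set (Fin n → ℚ))
    (m : latticeDual σ) : AddMonoidAlgebra k (latticeDual σ) :=
  AddMonoidAlgebra.single m 1

/-- The monomial ideal `I[P]` generated by the monomials `χ^m`, `m ∈ P ∩ ℤⁿ`. -/
noncomputable def idealOf (k : Type*) [CommRing k] {n : ℕ} (σ : Set (Fin n → ℚ))
    (P : Set (Fin n → ℚ)) : Ideal (AddMonoidAlgebra k (latticeDual σ)) :=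
  Ideal.span {f | ∃ m : latticeDual σ, Lq (m : Fin n → ℤ) ∈ P ∧ f = mono k σ m}

/-- `a` satisfies an equation of integral dependence over the ideal `I`:
`a^r + λ₁ a^(r-1) + ⋯ + λ_r = 0` with `λᵢ ∈ Iⁱ`. -/
def IntegralOverIdeal {A : Type*} [CommRing A] (I : Ideal A) (a : A) : Prop :=
  ∃ r : ℕ, 0 < r ∧ ∃ c : ℕ → A, (∀ i ∈ Finset.Icc 1 r, c i ∈ I ^ i) ∧
    a ^ r + ∑ i ∈ Finset.Icc 1 r, c i * a ^ (r - i) = 0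

/-- A monomial (torus-homogeneous) ideal of `k[σ∨ ∩ ℤⁿ]`. -/
def IsMonomialIdeal (k : Type*) [CommRing k] {n : ℕ} (σ : Set (Fin n → ℚ))
    (I : Ideal (AddMonoidAlgebra k (latticeDual σ))) : Prop :=
  ∃ S : Set (latticeDual σ), I = Ideal.span {f | ∃ m ∈ S, f = mono k σ m}

/-- The relative interior of the dual cone of a pointed cone `σ`:
those `m ∈ σ∨` pairing strictly positively with every nonzero `v ∈ σ`. -/
def relIntDual {n : ℕ} (σ : Set (Fin n → ℚ)) : Set (Fin n → ℚ) :=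
  {m | m ∈ dualCone σ ∧ ∀ v ∈ σ, v ≠ 0 → 0 < dot m v}

end Paper

/-!
Let `Δ₂ = conv F + σ` and suppose `v ∈ Δ₁ \ Δ₂`. Farkas' lemma, applied to the cone
over `Δ₂` in `ℚⁿ × ℚ` (generated by the points `(f, 1)`, `f ∈ F`, and the rays `(g, 0)`, `g ∈ σ`),
gives a functional `w ≥ 0` on `σ` with `w v < w f` for all `f ∈ F`. Since `σ` is pointed, Farkas'
lemma also gives a functional `f₀` positive on `σ \ {0}`; for `N` large, `N • w + f₀` still
separates `v` from `F` and lies in the relative interior of `σ∨`, and a positive multiple of it is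
a lattice point `m`. Then `h_{Δ₁}(m) ≤ ⟨m, v⟩ < h_{Δ₂}(m)`.
-/

section ProjAlong

variable {K V : Type*} [Field K] [AddCommGroup V] [Module K V]

def projAlong (w : Module.Dual K V) (a : V) : V →ₗ[K] V :=
  LinearMap.id - (w a)⁻¹ • w.smulRight a

lemma projAlong_apply (w : Module.Dual K V) (a x : V) :
    projAlong w a x = x - ((w a)⁻¹ * w x) • a := by
  simp [projAlong, mul_smul]

lemma projAlong_self {w : Module.Dual K V} {a : V} (ha : w a ≠ 0) : projAlong w a a = 0 := by
  simp [projAlong_apply, ha]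

end ProjAlong

section OrderedField

variable {K V : Type*} [Field K] [LinearOrder K] [IsStrictOrderedRing K] [AddCommGroup V]
  [Module K V]

lemma Module.exists_dual_neg {b : V} (hb : b ≠ 0) : ∃ f : Module.Dual K V, f b < 0 := by
  obtain ⟨φ, hφ⟩ : ∃ φ : Module.Dual K V, φ b ≠ 0 := by
    by_contra! h
    exact hb ((Module.forall_dual_apply_eq_zero_iff K b).1 h)
  exact ⟨-(φ b) • φ, by simpa [← sq, sq_pos_iff] using hφ⟩

theorem isLeast_image_convexHull_add (f : Module.Dual K V) {F : Finset V} (hF : F.Nonempty)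
    {C : Set V} (hC₀ : (0 : V) ∈ C) (hC : ∀ y ∈ C, 0 ≤ f y) :
    IsLeast (f '' (convexHull K (F : Set V) + C)) (F.inf' hF f) := by
  obtain ⟨x₀, hx₀, hx₀_min⟩ := F.exists_mem_eq_inf' hF f
  refine ⟨⟨x₀ + 0, Set.add_mem_add (subset_convexHull K _ hx₀) hC₀, by rw [add_zero, hx₀_min]⟩, ?_⟩
  rintro _ ⟨_, ⟨x, hx, y, hy, rfl⟩, rfl⟩
  have hx' : F.inf' hF f ≤ f x :=
    convexHull_min (fun z hz => F.inf'_le f hz) (convex_halfSpace_ge f.isLinear _) hx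
  rw [map_add]
  linarith [hC y hy]

namespace PointedCone

lemma nonneg_of_mem_hull {f : Module.Dual K V} {s : Set V} (hf : ∀ y ∈ s, 0 ≤ f y) {x : V}
    (hx : x ∈ hull K s) : 0 ≤ f x := by
  induction hx using Submodule.span_induction with
  | mem y hy => exact hf y hy
  | zero => simp
  | add y z _ _ hy hz => rw [map_add]; exact add_nonneg hy hz
  | smul a y _ hy => rw [← Nonneg.coe_smul, map_smul, smul_eq_mul]; exact mul_nonneg a.2 hy

lemma pos_of_mem_hull {f : Module.Dual K V} {s : Set V} (hf : ∀ y ∈ s, y ≠ 0 → 0 < f y) {x : V}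
    (hx : x ∈ hull K s) (hx₀ : x ≠ 0) : 0 < f x := by
  suffices ∀ x ∈ hull K s, x = 0 ∨ 0 < f x from (this x hx).resolve_left hx₀
  intro x hx
  induction hx using Submodule.span_induction with
  | mem y hy => exact (eq_or_ne y 0).imp_right (hf y hy)
  | zero => exact .inl rfl
  | add y z _ _ hy hz =>
    rcases hy with rfl | hy
    · simpa using hz
    rcases hz with rfl | hz
    · simpa using Or.inr hy
    exact .inr (by rw [map_add]; exact add_pos hy hz)
  | smul a y _ hy =>
    rcases hy with rfl | hy
    · simp
    obtain ⟨a, ha⟩ := a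
    rcases ha.eq_or_lt with rfl | ha
    · simp
    · exact .inr (by rw [Nonneg.mk_smul, map_smul, smul_eq_mul]; exact mul_pos ha hy)

lemma mem_hull_insert_of_projAlong_mem {w : Module.Dual K V} {a b : V} {t : Set V}
    (hwt : ∀ y ∈ t, 0 ≤ w y) (hwb : w b < 0) (hwa : w a < 0)
    (h : projAlong w a b ∈ hull K (projAlong w a '' t)) : b ∈ hull K (insert a t) := by
  have hmap := Submodule.map_span ((projAlong w a).restrictScalars {c : K // 0 ≤ c}) t
  rw [LinearMap.coe_restrictScalars] at hmap
  rw [hull, ← hmap] at h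
  obtain ⟨z, hz, hzb⟩ := h
  rw [LinearMap.coe_restrictScalars, projAlong_apply, projAlong_apply] at hzb
  have hc : 0 ≤ (w a)⁻¹ * (w b - w z) :=
    mul_nonneg_of_nonpos_of_nonpos (inv_nonpos.2 hwa.le)
      (by linarith [nonneg_of_mem_hull hwt hz])
  refine Submodule.mem_span_insert.2 ⟨⟨_, hc⟩, z, hz, ?_⟩
  rw [Nonneg.mk_smul]
  linear_combination (norm := module) -hzb

theorem exists_dual_nonneg_neg_of_notMem_hull (s : Finset V) {b : V}
    (hb : b ∉ hull K (s : Set V)) : ∃ f : Module.Dual K V, (∀ y ∈ s, 0 ≤ f y) ∧ f b < 0 := by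
  classical
  induction hk : s.card using Nat.strong_induction_on generalizing s b with
  | _ k ih =>
  obtain rfl | ⟨a, ha⟩ := s.eq_empty_or_nonempty
  · obtain ⟨f, hf⟩ := Module.exists_dual_neg (K := K) (b := b)
      (by rintro rfl; exact hb (zero_mem _))
    exact ⟨f, by simp, hf⟩
  set t := s.erase a
  have hst : (s : Set V) = insert a ↑t := by rw [← Finset.coe_insert, Finset.insert_erase ha]
  have ht : t.card < k := hk ▸ Finset.card_erase_lt_of_mem ha
  obtain ⟨w, hwt, hwb⟩ :=
    ih _ ht t (fun h => hb (Submodule.span_mono (hst ▸ Set.subset_insert a _) h)) rfl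
  by_cases hwa : 0 ≤ w a
  · refine ⟨w, fun y hy => ?_, hwb⟩
    rcases eq_or_ne y a with rfl | hya
    · exact hwa
    · exact hwt y (Finset.mem_erase.2 ⟨hya, hy⟩)
  push Not at hwa
  -- Fourier–Motzkin step: separate the projection of `b` along `a` onto `ker w` from the
  -- projected generators, and pull the separating functional back.
  set p := projAlong w a
  obtain ⟨u, hut, hub⟩ := ih _ (Finset.card_image_le.trans_lt ht) (t.image p) (b := p b)
    (fun h => hb (hst ▸ mem_hull_insert_of_projAlong_mem hwt hwb hwa (by simpa using h))) rfl
  refine ⟨u ∘ₗ p, fun y hy => ?_, hub⟩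
  rcases eq_or_ne y a with rfl | hya
  · simp [p, projAlong_self hwa.ne]
  · exact hut _ (Finset.mem_image_of_mem _ (Finset.mem_erase.2 ⟨hya, hy⟩))

theorem exists_dual_pos_of_salient (s : Finset V)
    (hs : (hull K (s : Set V) : ConvexCone K V).Salient) :
    ∃ f : Module.Dual K V, ∀ x ∈ hull K (s : Set V), x ≠ 0 → 0 < f x := by
  classical
  have hsep : ∀ y ∈ s, y ≠ 0 → ∃ w : Module.Dual K V, (∀ z ∈ s, 0 ≤ w z) ∧ w (-y) < 0 :=
    fun y hy hy₀ => exists_dual_nonneg_neg_of_notMem_hull s (hs y (subset_hull hy) hy₀)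
  choose! w hw_nonneg hw_neg using hsep
  refine ⟨∑ y ∈ s.filter (· ≠ 0), w y, fun x hx hx₀ => pos_of_mem_hull (fun y hy hy₀ => ?_) hx hx₀⟩
  rw [LinearMap.sum_apply]
  refine Finset.sum_pos' (fun z hz => ?_) ⟨y, Finset.mem_filter.2 ⟨hy, hy₀⟩, ?_⟩
  · obtain ⟨hzs, hz₀⟩ := Finset.mem_filter.1 hz
    exact hw_nonneg z hzs hz₀ y hy
  · simpa using hw_neg y hy hy₀

lemma mem_smul_add_of_mem_hull_homogenization {C : Set V} (hC : Convex K C) (hC₀ : C.Nonempty)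
    {H : PointedCone K V} {p : V × K} (hp : p ∈ hull K (C ×ˢ {1} ∪ (H : Set V) ×ˢ {0})) :
    0 ≤ p.2 ∧ p.1 ∈ p.2 • C + H := by
  obtain ⟨c, hc⟩ := hC₀
  induction hp using Submodule.span_induction with
  | mem q hq =>
    rcases hq with ⟨hq₁, hq₂⟩ | ⟨hq₁, hq₂⟩ <;> rw [Set.mem_singleton_iff.1 hq₂]
    · exact ⟨zero_le_one,
        by simpa using Set.add_mem_add (Set.smul_mem_smul_set (a := (1 : K)) hq₁) H.zero_mem⟩
    · exact ⟨le_rfl, by simpa using Set.add_mem_add (Set.smul_mem_smul_set (a := (0 : K)) hc) hq₁⟩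
  | zero =>
    exact ⟨le_rfl,
      by simpa using Set.add_mem_add (Set.smul_mem_smul_set (a := (0 : K)) hc) H.zero_mem⟩
  | add p q _ _ hp hq =>
    obtain ⟨hp₀, x, hx, h, hh, hxh⟩ := hp
    obtain ⟨hq₀, x', hx', h', hh', hxh'⟩ := hq
    refine ⟨add_nonneg hp₀ hq₀, ?_⟩
    rw [Prod.snd_add, hC.add_smul hp₀ hq₀, Prod.fst_add, ← hxh, ← hxh', add_add_add_comm]
    exact Set.add_mem_add (Set.add_mem_add hx hx') (H.add_mem hh hh')
  | smul a p _ hp =>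
    obtain ⟨hp₀, x, hx, h, hh, hxh⟩ := hp
    rw [← Nonneg.coe_smul, Prod.smul_fst, Prod.smul_snd, ← hxh, smul_add, smul_eq_mul, mul_smul]
    exact ⟨mul_nonneg a.2 hp₀, Set.add_mem_add (Set.smul_mem_smul_set hx) (H.smul_mem a.2 hh)⟩

theorem exists_dual_nonneg_lt_of_notMem_convexHull_add {F s : Finset V} (hF : F.Nonempty) {v : V}
    (hv : v ∉ convexHull K (F : Set V) + hull K (s : Set V)) :
    ∃ f : Module.Dual K V, (∀ y ∈ s, 0 ≤ f y) ∧ ∀ x ∈ F, f v < f x := by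
  classical
  have hsub : (↑(F ×ˢ {(1 : K)} ∪ s ×ˢ {(0 : K)}) : Set (V × K)) ⊆
      convexHull K ↑F ×ˢ {1} ∪ (hull K (s : Set V) : Set V) ×ˢ {0} := by
    rw [Finset.coe_union, Finset.coe_product, Finset.coe_product, Finset.coe_singleton,
      Finset.coe_singleton]
    exact Set.union_subset_union (Set.prod_mono (subset_convexHull K _) le_rfl)
      (Set.prod_mono subset_hull le_rfl)
  have hv' : ((v, 1) : V × K) ∉ hull K ↑(F ×ˢ {(1 : K)} ∪ s ×ˢ {(0 : K)}) := fun h =>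
    hv (by simpa using (mem_smul_add_of_mem_hull_homogenization (convex_convexHull K _)
      hF.to_set.convexHull (Submodule.span_mono hsub h)).2)
  obtain ⟨W, hW, hWv⟩ := exists_dual_nonneg_neg_of_notMem_hull _ hv'
  have hW_split : ∀ x : V, W (x, 1) = W (x, 0) + W (0, 1) := fun x => by
    rw [← map_add, Prod.mk_add_mk, add_zero, zero_add]
  refine ⟨W ∘ₗ LinearMap.inl K V K, fun y hy => hW _ (by simp [hy]), fun x hx => ?_⟩
  have hWx := hW (x, 1) (by simp [hx])
  simp only [LinearMap.comp_apply, LinearMap.inl_apply]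
  linarith [hW_split x, hW_split v]

theorem exists_dual_pos_lt_of_notMem_convexHull_add [Archimedean K] {F s : Finset V}
    (hF : F.Nonempty) (hs : (hull K (s : Set V) : ConvexCone K V).Salient) {v : V}
    (hv : v ∉ convexHull K (F : Set V) + hull K (s : Set V)) :
    ∃ f : Module.Dual K V, (∀ x ∈ hull K (s : Set V), x ≠ 0 → 0 < f x) ∧ ∀ x ∈ F, f v < f x := by
  obtain ⟨w, hws, hwF⟩ := exists_dual_nonneg_lt_of_notMem_convexHull_add hF hv
  obtain ⟨f₀, hf₀⟩ := exists_dual_pos_of_salient s hs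
  obtain ⟨N, hN⟩ : ∃ N : ℕ, ∀ x ∈ F, f₀ v - f₀ x < N * (w x - w v) :=
    ((Filter.eventually_all_finset F).2 fun x hx =>
      (tendsto_natCast_atTop_atTop.atTop_mul_const (sub_pos.2 (hwF x hx))).eventually_gt_atTop
        _).exists
  refine ⟨(N : K) • w + f₀, fun x hx hx₀ => ?_, fun x hx => ?_⟩
  · have := mul_nonneg N.cast_nonneg (nonneg_of_mem_hull hws hx)
    simp only [LinearMap.add_apply, LinearMap.smul_apply, smul_eq_mul]
    linarith [hf₀ x hx hx₀]
  · simp only [LinearMap.add_apply, LinearMap.smul_apply, smul_eq_mul]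
    linarith [hN x hx]

end PointedCone

end OrderedField

namespace Paper

section

variable {n : ℕ}

lemma dot_eq_dotProductEquiv (m v : Fin n → ℚ) : dot m v = dotProductEquiv ℚ (Fin n) m v := rfl

lemma IsPolyhedralCone.exists_eq_hull {σ : Set (Fin n → ℚ)} (hσ : IsPolyhedralCone σ) :
    ∃ s : Finset (Fin n → ℚ), σ = PointedCone.hull ℚ (s : Set (Fin n → ℚ)) := by
  classical
  obtain ⟨k, g, rfl⟩ := hσ
  refine ⟨Finset.univ.image g, Set.ext fun v => ?_⟩
  rw [Finset.coe_image, Finset.coe_univ, Set.image_univ, SetLike.mem_coe,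
    Submodule.mem_span_range_iff_exists_fun]
  constructor
  · rintro ⟨c, hc, rfl⟩
    exact ⟨fun i => ⟨c i, hc i⟩, by simp [Nonneg.mk_smul]⟩
  · rintro ⟨c, rfl⟩
    exact ⟨fun i => c i, fun i => (c i).2, by simp [Nonneg.coe_smul]⟩

lemma exists_lq_eq_nat_smul (m : Fin n → ℚ) :
    ∃ N : ℕ, 0 < N ∧ ∃ M : Fin n → ℤ, Lq M = (N : ℚ) • m := by
  classical
  refine ⟨∏ j, (m j).den, Finset.prod_pos fun j _ => (m j).den_pos,
    fun i => (∏ j ∈ Finset.univ.erase i, (m j).den : ℕ) * (m i).num, funext fun i => ?_⟩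
  simp only [Lq, Pi.smul_apply, smul_eq_mul]
  rw [← Finset.mul_prod_erase _ _ (Finset.mem_univ i)]
  push_cast
  rw [← Rat.den_mul_eq_num]
  ring

lemma mem_relIntDual_of_pos {σ : Set (Fin n → ℚ)} {m : Fin n → ℚ}
    (hm : ∀ v ∈ σ, v ≠ 0 → 0 < dot m v) : m ∈ relIntDual σ := by
  refine ⟨fun v hv => ?_, hm⟩
  rcases eq_or_ne v 0 with rfl | hv₀
  · simp [dot]
  · exact (hm v hv hv₀).le

lemma exists_lattice_mem_relIntDual_lt {s : Finset (Fin n → ℚ)}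
    (hs : Pointed (PointedCone.hull ℚ (s : Set (Fin n → ℚ)) : Set (Fin n → ℚ)))
    {F : Finset (Fin n → ℚ)} (hF : F.Nonempty) {v : Fin n → ℚ}
    (hv : v ∉ convexHull ℚ (F : Set (Fin n → ℚ)) + PointedCone.hull ℚ (s : Set (Fin n → ℚ))) :
    ∃ M : Fin n → ℤ, Lq M ∈ relIntDual (PointedCone.hull ℚ (s : Set (Fin n → ℚ))) ∧
      ∀ x ∈ F, dot (Lq M) v < dot (Lq M) x := by
  obtain ⟨f, hf_pos, hf_lt⟩ := PointedCone.exists_dual_pos_lt_of_notMem_convexHull_add hF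
    (fun x hx hx₀ hnx => hx₀ (hs x hx hnx)) hv
  obtain ⟨N, hN, M, hM⟩ := exists_lq_eq_nat_smul ((dotProductEquiv ℚ (Fin n)).symm f)
  have hN' : (0 : ℚ) < N := by exact_mod_cast hN
  have hdot : ∀ x, dot (Lq M) x = N * f x := fun x => by
    rw [hM, dot_eq_dotProductEquiv, map_smul, LinearEquiv.apply_symm_apply, LinearMap.smul_apply,
      smul_eq_mul]
  refine ⟨M, mem_relIntDual_of_pos fun x hx hx₀ => ?_, fun x hx => ?_⟩
  · rw [hdot]
    exact mul_pos hN' (hf_pos x hx hx₀)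
  · rw [hdot, hdot]
    exact mul_lt_mul_of_pos_left (hf_lt x hx) hN'

lemma subset_of_isLeast_dot {σ : Set (Fin n → ℚ)} (hσ : IsPolyhedralCone σ) (hσp : Pointed σ)
    {Δ₁ Δ₂ : Set (Fin n → ℚ)} (h₂ : IsSigmaPolyhedron σ Δ₂)
    (h : ∀ m : Fin n → ℤ, Lq m ∈ relIntDual σ → ∀ r : ℚ,
      IsLeast ((fun v => dot (Lq m) v) '' Δ₂) r → IsLeast ((fun v => dot (Lq m) v) '' Δ₁) r) :
    Δ₁ ⊆ Δ₂ := by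
  obtain ⟨s, rfl⟩ := hσ.exists_eq_hull
  obtain ⟨F, hF, rfl⟩ := h₂
  intro v hv
  by_contra hv₂
  obtain ⟨M, hM, hlt⟩ := exists_lattice_mem_relIntDual_lt hσp hF hv₂
  have hleast := isLeast_image_convexHull_add (dotProductEquiv ℚ (Fin n) (Lq M)) hF
    (PointedCone.hull ℚ (s : Set (Fin n → ℚ))).zero_mem hM.1
  have hle := (h M hM _ hleast).2 ⟨v, hv, rfl⟩
  exact not_lt.2 hle ((Finset.lt_inf'_iff hF).2 hlt)

end

/-- two `σ`-polyhedra with equal support functions on all lattice points in the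
relative interior of `σ∨` coincide. -/
theorem statement1 {n : ℕ} (σ : Set (Fin n → ℚ))
    (hσ : IsPolyhedralCone σ) (hσp : Pointed σ)
    (Δ₁ Δ₂ : Set (Fin n → ℚ))
    (h₁ : IsSigmaPolyhedron σ Δ₁) (h₂ : IsSigmaPolyhedron σ Δ₂)
    (heq : ∀ m : Fin n → ℤ, Lq m ∈ relIntDual σ →
      ∀ r : ℚ, IsLeast ((fun v => dot (Lq m) v) '' Δ₁) r ↔
        IsLeast ((fun v => dot (Lq m) v) '' Δ₂) r) :
    Δ₁ = Δ₂ :=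
  (subset_of_isLeast_dot hσ hσp h₂ fun m hm r => (heq m hm r).2).antisymm
    (subset_of_isLeast_dot hσ hσp h₁ fun m hm r => (heq m hm r).1)

end Paper
end

section
/- Let σ ⊆ ℚⁿ be a pointed polyhedral cone with dual cone σ∨, and let P = Q + σ∨ where Q is a polytope whose vertices lie in ℤⁿ. Define S_P = {(m, e) ∈ ℤⁿ × ℕ : m ∈ eP}. Then S_P is a saturated subsemigroup of ℤⁿ × ℤ, i.e., if s ∈ ℤ_{>0} and (m,e) ∈ ℤⁿ × ℤ satisfy s·(m,e) ∈ S_P, then (m,e) ∈ S_P (where 0·P is interpreted as σ∨). -/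
open scoped Pointwise
open Finset

namespace Paper

/-- The semigroup `S_P = {(m,e) : m ∈ eP ∩ ℤⁿ}` (with `0P = σ∨`), viewed inside `ℤⁿ × ℤ`. -/
def SP {n : ℕ} (σ P : Set (Fin n → ℚ)) : Set ((Fin n → ℤ) × ℤ) :=
  {p | 0 ≤ p.2 ∧ Lq p.1 ∈ mink (dualCone σ) P p.2.toNat}

/-! Write `P = C + σ∨` with `C` convex and nonempty. Since `σ∨ + σ∨ = σ∨`, an induction gives
`eP = e • C + σ∨` for every `e`, including `e = 0` because `0 • C = {0}`. Additivity of `S_P` is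
then `(e₁ + e₂) • C = e₁ • C + e₂ • C` for convex `C`, and saturation is `(s e)P = s • (eP)`,
which holds because `s • σ∨ = σ∨` for `s > 0`. -/

end Paper

namespace ConvexCone

theorem coe_add_coe_of_pointed {R M : Type*} [Semiring R] [PartialOrder R] [AddCommMonoid M]
    [SMul R M] (K : ConvexCone R M) (hK : K.Pointed) : (K : Set M) + K = K := by
  refine (Set.add_subset_iff.2 fun x hx y hy => K.add_mem hx hy).antisymm fun x hx => ?_
  exact ⟨x, hx, 0, hK, add_zero x⟩

theorem smul_coe_of_pos {𝕜 M : Type*} [Field 𝕜] [LinearOrder 𝕜] [IsStrictOrderedRing 𝕜]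
    [AddCommGroup M] [Module 𝕜 M] (K : ConvexCone 𝕜 M)
    {c : 𝕜} (hc : 0 < c) : c • (K : Set M) = K := by
  refine (Set.smul_set_subset_iff.2 fun x hx => K.smul_mem hc hx).antisymm fun x hx => ?_
  exact ⟨c⁻¹ • x, K.smul_mem (inv_pos.2 hc) hx, smul_inv_smul₀ hc.ne' x⟩

end ConvexCone

namespace Paper

section Minkowski

variable {n : ℕ} {K C : Set (Fin n → ℚ)}

theorem mink_succ (hK : K + K = K) (e : ℕ) :
    mink K (C + K) (e + 1) = mink K (C + K) e + (C + K) := by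
  rcases e with _ | e
  · rw [mink, mink, add_left_comm, hK]
  · rfl

theorem mink_eq_smul_add (hC : Convex ℚ C) (hCne : C.Nonempty) (hK : K + K = K) (e : ℕ) :
    mink K (C + K) e = (e : ℚ) • C + K := by
  induction e with
  | zero => simp [mink, Set.zero_smul_set hCne]
  | succ e ih =>
    rw [mink_succ hK, ih, add_add_add_comm, hK, Nat.cast_succ,
      hC.add_smul e.cast_nonneg zero_le_one, one_smul]

theorem mink_add (hC : Convex ℚ C) (hCne : C.Nonempty) (hK : K + K = K) (e₁ e₂ : ℕ) :
    mink K (C + K) (e₁ + e₂) = mink K (C + K) e₁ + mink K (C + K) e₂ := by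
  rw [mink_eq_smul_add hC hCne hK, mink_eq_smul_add hC hCne hK, mink_eq_smul_add hC hCne hK,
    Nat.cast_add, hC.add_smul e₁.cast_nonneg e₂.cast_nonneg, add_add_add_comm, hK]

theorem mink_mul (hC : Convex ℚ C) (hCne : C.Nonempty) (hK : K + K = K) {t : ℕ}
    (hKt : (t : ℚ) • K = K) (e : ℕ) :
    mink K (C + K) (t * e) = (t : ℚ) • mink K (C + K) e := by
  rw [mink_eq_smul_add hC hCne hK, mink_eq_smul_add hC hCne hK, smul_add, hKt,
    smul_smul, Nat.cast_mul]

end Minkowski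

section Semigroup

variable {n : ℕ}

theorem Lq_add (a b : Fin n → ℤ) : Lq (a + b) = Lq a + Lq b := by
  funext i; simp [Lq]

theorem Lq_zsmul (s : ℤ) (a : Fin n → ℤ) : Lq (s • a) = (s : ℚ) • Lq a := by
  funext i; simp [Lq]

theorem dot_eq_dotProduct (m v : Fin n → ℚ) : dot m v = m ⬝ᵥ v := rfl

def dualConvexCone (σ : Set (Fin n → ℚ)) : ConvexCone ℚ (Fin n → ℚ) where
  carrier := dualCone σ
  smul_mem' c hc m hm v hv := by
    simpa only [dot_eq_dotProduct, smul_dotProduct, smul_eq_mul] using mul_nonneg hc.le (hm v hv)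
  add_mem' a ha b hb v hv := by
    simpa only [dot_eq_dotProduct, add_dotProduct] using add_nonneg (ha v hv) (hb v hv)

theorem pointed_dualConvexCone (σ : Set (Fin n → ℚ)) : (dualConvexCone σ).Pointed :=
  fun v _ => by simp [dot]

theorem dualCone_add_dualCone (σ : Set (Fin n → ℚ)) : dualCone σ + dualCone σ = dualCone σ :=
  (dualConvexCone σ).coe_add_coe_of_pointed (pointed_dualConvexCone σ)

theorem smul_dualCone (σ : Set (Fin n → ℚ)) {c : ℚ} (hc : 0 < c) : c • dualCone σ = dualCone σ :=
  (dualConvexCone σ).smul_coe_of_pos hc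

theorem mem_SP_natCast {σ P : Set (Fin n → ℚ)} {m : Fin n → ℤ} {e : ℕ} :
    (m, (e : ℤ)) ∈ SP σ P ↔ Lq m ∈ mink (dualCone σ) P e := by
  simp [SP]

variable {σ C : Set (Fin n → ℚ)}

theorem SP_add_mem (hC : Convex ℚ C) (hCne : C.Nonempty) {p q : (Fin n → ℤ) × ℤ}
    (hp : p ∈ SP σ (C + dualCone σ)) (hq : q ∈ SP σ (C + dualCone σ)) :
    p + q ∈ SP σ (C + dualCone σ) := by
  obtain ⟨m, e⟩ := p
  obtain ⟨m', e'⟩ := q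
  lift e to ℕ using hp.1
  lift e' to ℕ using hq.1
  rw [mem_SP_natCast] at hp hq
  rw [Prod.mk_add_mk, ← Nat.cast_add, mem_SP_natCast, Lq_add,
    mink_add hC hCne (dualCone_add_dualCone σ)]
  exact Set.add_mem_add hp hq

theorem SP_saturated (hC : Convex ℚ C) (hCne : C.Nonempty) {s : ℤ} (hs : 0 < s)
    {p : (Fin n → ℤ) × ℤ} (h : s • p ∈ SP σ (C + dualCone σ)) : p ∈ SP σ (C + dualCone σ) := by
  obtain ⟨m, e⟩ := p
  have he : 0 ≤ e := nonneg_of_mul_nonneg_right h.1 hs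
  lift s to ℕ using hs.le
  lift e to ℕ using he
  have hs' : (0 : ℚ) < s := Nat.cast_pos.2 (Int.natCast_pos.1 hs)
  rw [Prod.smul_mk, smul_eq_mul, ← Nat.cast_mul, mem_SP_natCast, Lq_zsmul, Int.cast_natCast,
    mink_mul hC hCne (dualCone_add_dualCone σ) (smul_dualCone σ hs')] at h
  rwa [mem_SP_natCast, ← Set.smul_mem_smul_set_iff₀ hs'.ne']

end Semigroup

theorem statement2_general {n : ℕ} (σ : Set (Fin n → ℚ))
    (P : Set (Fin n → ℚ)) (hP : IsIntegralPoly (dualCone σ) P) :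
    (∀ p q : (Fin n → ℤ) × ℤ, p ∈ SP σ P → q ∈ SP σ P → p + q ∈ SP σ P) ∧
    (∀ s : ℤ, 0 < s → ∀ p : (Fin n → ℤ) × ℤ, s • p ∈ SP σ P → p ∈ SP σ P) := by
  obtain ⟨F, hF, rfl⟩ := hP
  have hC := convex_convexHull ℚ (Lq '' (F : Set (Fin n → ℤ)))
  have hCne := ((Finset.coe_nonempty.2 hF).image Lq).convexHull (𝕜 := ℚ)
  exact ⟨fun p q => SP_add_mem hC hCne, fun s hs p => SP_saturated hC hCne hs⟩

/-- for an integral `σ∨`-polyhedron `P`, the set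
`S_P = {(m,e) | m ∈ eP ∩ ℤⁿ}` is a subsemigroup of `ℤⁿ × ℤ`, and it is saturated:
`s • (m,e) ∈ S_P` for some `s > 0` implies `(m,e) ∈ S_P`. -/
theorem statement2 {n : ℕ} (σ : Set (Fin n → ℚ))
    (hσ : IsPolyhedralCone σ) (hσp : Pointed σ)
    (P : Set (Fin n → ℚ)) (hP : IsIntegralPoly (dualCone σ) P) :
    (∀ p q : (Fin n → ℤ) × ℤ, p ∈ SP σ P → q ∈ SP σ P → p + q ∈ SP σ P) ∧
    (∀ s : ℤ, 0 < s → ∀ p : (Fin n → ℤ) × ℤ, s • p ∈ SP σ P → p ∈ SP σ P) :=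
  statement2_general σ P hP

end Paper
end

section
/- Let σ ⊆ ℚⁿ be a pointed polyhedral cone with dual σ∨, and let P = Q + σ∨ where Q is a polytope with vertices in ℤⁿ. Then for every integer e ≥ 1, the convex hull of the set E_{[e,P]} = {m₁ + ⋯ + m_e : m₁, …, m_e ∈ P ∩ ℤⁿ} equals eP (the e-th Minkowski multiple of P). -/
open scoped Pointwise
open Finset

namespace Paper

/-! Every point of `σ∨` lies on a segment from `0` to a lattice point of `σ∨` (clear denominators),
and the vertices of `Q` are lattice points, so `P = conv (P ∩ ℤⁿ)`. Since `conv` is additive for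
Minkowski sums, `conv E_{[e,P]} = conv (e • (P ∩ ℤⁿ)) = e • conv (P ∩ ℤⁿ) = e • P`. -/

lemma dot_smul_left {n : ℕ} (c : ℚ) (a v : Fin n → ℚ) : dot (c • a) v = c * dot a v := by
  simp only [dot, Pi.smul_apply, smul_eq_mul, Finset.mul_sum, mul_assoc]

lemma smul_mem_dualCone {n : ℕ} {σ : Set (Fin n → ℚ)} {c : ℚ} (hc : 0 ≤ c)
    {w : Fin n → ℚ} (hw : w ∈ dualCone σ) : c • w ∈ dualCone σ := fun v hv => by
  rw [dot_smul_left]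
  exact mul_nonneg hc (hw v hv)

lemma convex_dualCone {n : ℕ} (σ : Set (Fin n → ℚ)) : Convex ℚ (dualCone σ) := by
  intro x hx y hy a b ha hb _ v hv
  have hsum : dot (a • x + b • y) v = a * dot x v + b * dot y v := by
    simp only [dot, Pi.add_apply, Pi.smul_apply, smul_eq_mul, add_mul, Finset.sum_add_distrib,
      Finset.mul_sum, mul_assoc]
  rw [hsum]
  exact add_nonneg (mul_nonneg ha (hx v hv)) (mul_nonneg hb (hy v hv))

lemma IsLatticePt.add {n : ℕ} {a b : Fin n → ℚ} (ha : IsLatticePt a) (hb : IsLatticePt b) :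
    IsLatticePt (a + b) := fun i => by
  obtain ⟨x, hx⟩ := ha i
  obtain ⟨y, hy⟩ := hb i
  exact ⟨x + y, by simp [hx, hy]⟩

lemma isLatticePt_Lq {n : ℕ} (m : Fin n → ℤ) : IsLatticePt (Lq m) := fun i => ⟨m i, rfl⟩

lemma exists_pos_nat_smul_isLatticePt {n : ℕ} (w : Fin n → ℚ) :
    ∃ N : ℕ, 0 < N ∧ IsLatticePt ((N : ℚ) • w) := by
  refine ⟨∏ i, (w i).den, Finset.prod_pos fun i _ => (w i).den_pos, fun i => ?_⟩
  obtain ⟨k, hk⟩ := Finset.dvd_prod_of_mem (fun i => (w i).den) (Finset.mem_univ i)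
  refine ⟨k * (w i).num, ?_⟩
  rw [Pi.smul_apply, smul_eq_mul, hk, Nat.cast_mul, mul_right_comm, Rat.den_mul_eq_num]
  push_cast
  ring

/-- `w` lies on the segment from `0 = 0 • w` to a lattice multiple `N • w`. -/
lemma subset_convexHull_latticePts {n : ℕ} {C : Set (Fin n → ℚ)}
    (hC : ∀ N : ℕ, ∀ w ∈ C, (N : ℚ) • w ∈ C) :
    C ⊆ convexHull ℚ {x | x ∈ C ∧ IsLatticePt x} := by
  intro w hw
  obtain ⟨N, hN, hNw⟩ := exists_pos_nat_smul_isLatticePt w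
  have hN0 : (0 : ℚ) < N := by exact_mod_cast hN
  have hzero : (0 : Fin n → ℚ) ∈ convexHull ℚ {x | x ∈ C ∧ IsLatticePt x} :=
    subset_convexHull ℚ _ ⟨by simpa using hC 0 w hw, fun _ => ⟨0, by simp⟩⟩
  have hmul : (N : ℚ) • w ∈ convexHull ℚ {x | x ∈ C ∧ IsLatticePt x} :=
    subset_convexHull ℚ _ ⟨hC N w hw, hNw⟩
  have hscale : (N : ℚ)⁻¹ ∈ Set.Icc (0 : ℚ) 1 :=
    ⟨inv_nonneg.mpr hN0.le, inv_le_one_of_one_le₀ (by exact_mod_cast hN)⟩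
  simpa [smul_smul, inv_mul_cancel₀ hN0.ne'] using
    (convex_convexHull ℚ _).smul_mem_of_zero_mem hzero hmul hscale

lemma convexHull_latticePts_of_isIntegralPoly {n : ℕ} {C P : Set (Fin n → ℚ)}
    (hCconv : Convex ℚ C) (hC : ∀ N : ℕ, ∀ w ∈ C, (N : ℚ) • w ∈ C)
    (hP : IsIntegralPoly C P) :
    convexHull ℚ {x | x ∈ P ∧ IsLatticePt x} = P := by
  obtain ⟨F, -, rfl⟩ := hP
  set V := Lq '' (↑F : Set (Fin n → ℤ))
  refine (convexHull_min (fun x hx => hx.1) ((convex_convexHull ℚ V).add hCconv)).antisymm ?_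
  have hgen : V + {x | x ∈ C ∧ IsLatticePt x} ⊆ {x | x ∈ convexHull ℚ V + C ∧ IsLatticePt x} := by
    rintro _ ⟨_, ⟨m, hm, rfl⟩, w, hw, rfl⟩
    exact ⟨Set.add_mem_add (subset_convexHull ℚ V ⟨m, hm, rfl⟩) hw.1,
      (isLatticePt_Lq m).add hw.2⟩
  calc convexHull ℚ V + C
      ⊆ convexHull ℚ V + convexHull ℚ {x | x ∈ C ∧ IsLatticePt x} :=
        Set.add_subset_add_left (subset_convexHull_latticePts hC)
    _ = convexHull ℚ (V + {x | x ∈ C ∧ IsLatticePt x}) := (convexHull_add _ _).symm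
    _ ⊆ _ := convexHull_mono hgen

lemma mink_eq_nsmul {n : ℕ} (σv P : Set (Fin n → ℚ)) :
    ∀ {e : ℕ}, 1 ≤ e → mink σv P e = e • P
  | 1, _ => (one_nsmul P).symm
  | e + 2, _ => by rw [mink, mink_eq_nsmul σv P (by omega : 1 ≤ e + 1), ← succ_nsmul]

theorem statement3_general {n : ℕ} (σ : Set (Fin n → ℚ))
    (P : Set (Fin n → ℚ)) (hP : IsIntegralPoly (dualCone σ) P)
    (e : ℕ) (he : 1 ≤ e) :
    convexHull ℚ {m : Fin n → ℚ | ∃ f : Fin e → (Fin n → ℚ),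
        (∀ i, f i ∈ P ∧ IsLatticePt (f i)) ∧ m = ∑ i, f i} =
      mink (dualCone σ) P e := by
  have hsums : {m : Fin n → ℚ | ∃ f : Fin e → (Fin n → ℚ),
      (∀ i, f i ∈ P ∧ IsLatticePt (f i)) ∧ m = ∑ i, f i} = e • {x | x ∈ P ∧ IsLatticePt x} := by
    ext m
    simp only [Set.mem_nsmul_iff_sum, Set.mem_ofPred_eq, eq_comm]
  have hlattice : convexHull ℚ {x | x ∈ P ∧ IsLatticePt x} = P :=
    convexHull_latticePts_of_isIntegralPoly (convex_dualCone σ)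
      (fun N _ hw => smul_mem_dualCone N.cast_nonneg hw) hP
  rw [hsums, mink_eq_nsmul _ _ he, ← congrArg (e • ·) hlattice]
  exact map_nsmul (convexHullAddMonoidHom ℚ (Fin n → ℚ)) e _

/-- for an integral `σ∨`-polyhedron `P` and every `e ≥ 1`, the convex hull of
`E_{[e,P]} = {m₁ + ⋯ + m_e : mᵢ ∈ P ∩ ℤⁿ}` equals the `e`-th Minkowski multiple `eP`. -/
theorem statement3 {n : ℕ} (σ : Set (Fin n → ℚ))
    (hσ : IsPolyhedralCone σ) (hσp : Pointed σ)
    (P : Set (Fin n → ℚ)) (hP : IsIntegralPoly (dualCone σ) P)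
    (e : ℕ) (he : 1 ≤ e) :
    convexHull ℚ {m : Fin n → ℚ | ∃ f : Fin e → (Fin n → ℚ),
        (∀ i, f i ∈ P ∧ IsLatticePt (f i)) ∧ m = ∑ i, f i} =
      mink (dualCone σ) P e :=
  statement3_general σ P hP e he

end Paper
end

section
/- Let σ ⊆ ℚⁿ be a pointed polyhedral cone with dual σ∨, and let P = Q + σ∨ with Q a polytope having vertices in ℤⁿ. Then P = Conv(P ∩ ℤⁿ), i.e., P equals the convex hull of its lattice points. -/
/-!
An integral `σ∨`-polyhedron is the convex hull of the Minkowski sums `a + c` of lattice vertices `a`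
and cone vectors `c`, so it suffices to write each such `a + c` as a convex combination of lattice
points of `P`. Choose `N ≥ 1` with `N • c` integral: then `a` and `a + N • c` are lattice points of
`P`, and `a + c` lies on the segment between them.
-/

open scoped Pointwise
open Finset

namespace Paper

lemma dualCone_eq_dual {n : ℕ} (σ : Set (Fin n → ℚ)) :
    dualCone σ = PointedCone.dual (dotProductBilin ℚ ℚ) σ := by
  ext m
  simp [dualCone, dot, dotProduct, mul_comm]

lemma IsLatticePt.add_s4 {n : ℕ} {v w : Fin n → ℚ} (hv : IsLatticePt v) (hw : IsLatticePt w) :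
    IsLatticePt (v + w) := fun i => by
  obtain ⟨a, ha⟩ := hv i
  obtain ⟨b, hb⟩ := hw i
  exact ⟨a + b, by simp [ha, hb]⟩

lemma exists_pos_nsmul_isLatticePt {n : ℕ} (v : Fin n → ℚ) :
    ∃ N : ℕ, 0 < N ∧ IsLatticePt (N • v) := by
  refine ⟨∏ i, (v i).den, Finset.prod_pos fun i _ => (v i).pos, fun i => ?_⟩
  obtain ⟨k, hk⟩ := Finset.dvd_prod_of_mem (fun j => (v j).den) (Finset.mem_univ i)
  refine ⟨k * (v i).num, ?_⟩
  rw [Pi.smul_apply, hk, nsmul_eq_mul, Int.cast_mul, ← Rat.mul_den_eq_num]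
  push_cast
  ring

lemma add_mem_convexHull_latticePts {n : ℕ} (C : PointedCone ℚ (Fin n → ℚ))
    {S : Set (Fin n → ℚ)} {z c : Fin n → ℚ} (hz : IsLatticePt z) (hS : ∀ c ∈ C, z + c ∈ S)
    (hc : c ∈ C) : z + c ∈ convexHull ℚ {v | v ∈ S ∧ IsLatticePt v} := by
  obtain ⟨N, hN, hNc⟩ := exists_pos_nsmul_isLatticePt c
  have hz_mem : z ∈ convexHull ℚ {v | v ∈ S ∧ IsLatticePt v} :=
    subset_convexHull ℚ _ ⟨by simpa using hS 0 C.zero_mem, hz⟩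
  have hzN_mem : z + N • c ∈ convexHull ℚ {v | v ∈ S ∧ IsLatticePt v} :=
    subset_convexHull ℚ _ ⟨hS _ (nsmul_mem hc N), hz.add_s4 hNc⟩
  have hN_inv : (N : ℚ)⁻¹ ∈ Set.Icc (0 : ℚ) 1 :=
    ⟨by positivity, inv_le_one_of_one_le₀ (by exact_mod_cast hN)⟩
  have := (convex_convexHull ℚ _).add_smul_mem hz_mem hzN_mem hN_inv
  rwa [← Nat.cast_smul_eq_nsmul ℚ, smul_smul, inv_mul_cancel₀ (by positivity), one_smul] at this

theorem convexHull_add_pointedCone_eq_convexHull_latticePts {n : ℕ} {A : Set (Fin n → ℚ)}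
    (hA : ∀ a ∈ A, IsLatticePt a) (C : PointedCone ℚ (Fin n → ℚ)) :
    convexHull ℚ A + C = convexHull ℚ {v | v ∈ convexHull ℚ A + C ∧ IsLatticePt v} := by
  rw [← C.convex.convexHull_eq, ← convexHull_add]
  refine subset_antisymm ?_ <| (convex_convexHull ℚ _).convexHull_subset_iff.2 fun v hv => hv.1
  refine (convex_convexHull ℚ _).convexHull_subset_iff.2 ?_
  rintro _ ⟨a, ha, c, hc, rfl⟩
  have hsub : {v | v ∈ {a} + (C : Set (Fin n → ℚ)) ∧ IsLatticePt v} ⊆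
      {v | v ∈ convexHull ℚ (A + (C : Set (Fin n → ℚ))) ∧ IsLatticePt v} := fun v hv =>
    ⟨subset_convexHull ℚ _ (Set.add_subset_add_right (Set.singleton_subset_iff.2 ha) hv.1), hv.2⟩
  exact convexHull_mono hsub <|
    add_mem_convexHull_latticePts C (hA a ha) (fun c hc => Set.add_mem_add rfl hc) hc

theorem statement4_general {n : ℕ} (σ : Set (Fin n → ℚ))
    (P : Set (Fin n → ℚ)) (hP : IsIntegralPoly (dualCone σ) P) :
    P = convexHull ℚ {v | v ∈ P ∧ IsLatticePt v} := by
  obtain ⟨F, -, rfl⟩ := hP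
  rw [dualCone_eq_dual]
  exact convexHull_add_pointedCone_eq_convexHull_latticePts
    (by rintro _ ⟨z, -, rfl⟩ i; exact ⟨z i, rfl⟩) _

/-- an integral `σ∨`-polyhedron equals the convex hull of its lattice points. -/
theorem statement4 {n : ℕ} (σ : Set (Fin n → ℚ))
    (hσ : IsPolyhedralCone σ) (hσp : Pointed σ)
    (P : Set (Fin n → ℚ)) (hP : IsIntegralPoly (dualCone σ) P) :
    P = convexHull ℚ {v | v ∈ P ∧ IsLatticePt v} :=
  statement4_general σ P hP

end Paper
end

section
/- Let σ be the positive octant in ℚ³ so that σ∨ = ℚ³_{≥0}, and let P = Conv((2,0,0), (0,3,0), (0,0,7)) + σ∨. Then the polyhedron P is not normal; equivalently, the monomial ideal I = (x²,y³,z⁷)‾ = I[P] of k[x,y,z] has some power that is not integrally closed. -/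
open scoped Pointwise
open Finset

namespace Paper

/-- The nonnegative orthant `ℚ³_{≥0} = σ∨` for `σ` the positive octant. -/
def octant : Set (Fin 3 → ℚ) := {v | ∀ i, 0 ≤ v i}

/-- The polyhedron `P = Conv((2,0,0), (0,3,0), (0,0,7)) + ℚ³_{≥0}`. -/
def P237 : Set (Fin 3 → ℚ) :=
  convexHull ℚ ({![2, 0, 0], ![0, 3, 0], ![0, 0, 7]} : Set (Fin 3 → ℚ)) + octant

/-!
The lattice point `(1,2,6)` of `2P` is the sum `(1, 3/2, 0) + (0, 1/2, 6)` of two points of `P`.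
Every point of `P` is nonnegative and satisfies `21x + 14y + 6z ≥ 42`, the inequality of the
facet through the three vertices. Since `21 + 2·14 + 6·6 = 85 < 2·44`, a splitting
`(1,2,6) = u + v` into lattice points of `P` would put `u` both in the strip
`42 ≤ 21x + 14y + 6z ≤ 43` and in the box `[0,1] × [0,2] × [0,6]`, and no lattice point lies in both.
-/

lemma isLinearMap_dot {n : ℕ} (w : Fin n → ℚ) : IsLinearMap ℚ (dot w) :=
  ⟨fun u v => dotProduct_add w u v, fun c v => dotProduct_smul c w v⟩

lemma convexHull_add_subset_halfSpace {n : ℕ} {s C : Set (Fin n → ℚ)} {w : Fin n → ℚ} {c : ℚ}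
    (hw : w ∈ dualCone C) (hs : ∀ p ∈ s, c ≤ dot w p) :
    convexHull ℚ s + C ⊆ {v | c ≤ dot w v} := by
  rintro _ ⟨p, hp, q, hq, rfl⟩
  have hp' : c ≤ dot w p := convexHull_min hs (convex_halfSpace_ge (isLinearMap_dot w) c) hp
  have hq' : 0 ≤ dot w q := hw q hq
  show c ≤ w ⬝ᵥ (p + q)
  rw [dotProduct_add]
  exact (add_zero c).ge.trans (add_le_add hp' hq')

lemma convex_octant : Convex ℚ octant := convex_Ici (0 : Fin 3 → ℚ)

lemma add_mem_octant {u v : Fin 3 → ℚ} (hu : u ∈ octant) (hv : v ∈ octant) : u + v ∈ octant :=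
  fun i => add_nonneg (hu i) (hv i)

lemma P237_subset_octant : P237 ⊆ octant := by
  rintro _ ⟨p, hp, q, hq, rfl⟩
  refine add_mem_octant (convexHull_min ?_ convex_octant hp) hq
  rintro w (rfl | rfl | rfl) i <;> fin_cases i <;> simp

lemma P237_subset_halfSpace : P237 ⊆ {v | 42 ≤ dot ![21, 14, 6] v} := by
  refine convexHull_add_subset_halfSpace (fun v hv => ?_) ?_
  · have := hv 0; have := hv 1; have := hv 2
    simp only [dot, Fin.sum_univ_three, Matrix.cons_val_zero, Matrix.cons_val_one, Matrix.cons_val]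
    linarith
  · rintro p (rfl | rfl | rfl) <;> norm_num [dot, Fin.sum_univ_three, Matrix.cons_val_two]

lemma le_of_Lq_mem_P237 {m : Fin 3 → ℤ} (hm : Lq m ∈ P237) :
    0 ≤ m 0 ∧ 0 ≤ m 1 ∧ 0 ≤ m 2 ∧ 42 ≤ 21 * m 0 + 14 * m 1 + 6 * m 2 := by
  have hpos := P237_subset_octant hm
  have hL : (42 : ℚ) ≤ 21 * m 0 + 14 * m 1 + 6 * m 2 := by
    simpa [dot, Fin.sum_univ_three, Lq] using P237_subset_halfSpace hm
  have h0 : (0 : ℚ) ≤ m 0 := hpos 0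
  have h1 : (0 : ℚ) ≤ m 1 := hpos 1
  have h2 : (0 : ℚ) ≤ m 2 := hpos 2
  exact ⟨by exact_mod_cast h0, by exact_mod_cast h1, by exact_mod_cast h2, by exact_mod_cast hL⟩

lemma notMem_Icc_of_le_126 {a b c : ℤ} (ha : 0 ≤ a ∧ a ≤ 1) (hb : 0 ≤ b ∧ b ≤ 2)
    (hc : 0 ≤ c ∧ c ≤ 6) : 21 * a + 14 * b + 6 * c ∉ Set.Icc 42 43 := by
  obtain ⟨ha0, ha1⟩ := ha
  obtain ⟨hb0, hb1⟩ := hb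
  rw [Set.mem_Icc]
  interval_cases a <;> interval_cases b <;> omega

lemma not_exists_lattice_add_eq_126 :
    ¬ ∃ u v : Fin 3 → ℤ, Lq u ∈ P237 ∧ Lq v ∈ P237 ∧ u + v = ![1, 2, 6] := by
  rintro ⟨u, v, hu, hv, huv⟩
  have hu := le_of_Lq_mem_P237 hu
  have hv := le_of_Lq_mem_P237 hv
  have h0 : u 0 + v 0 = 1 := congrFun huv 0
  have h1 : u 1 + v 1 = 2 := congrFun huv 1
  have h2 : u 2 + v 2 = 6 := congrFun huv 2
  exact notMem_Icc_of_le_126 (a := u 0) (b := u 1) (c := u 2) (by omega) (by omega) (by omega)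
    ⟨by omega, by omega⟩

lemma Lq_126_mem_mink_two : Lq ![1, 2, 6] ∈ mink octant P237 2 := by
  have hx : ![1, 3/2, 0] ∈ P237 := by
    refine ⟨_, segment_subset_convexHull (x := ![2, 0, 0]) (y := ![0, 3, 0]) (by simp) (by simp)
      ⟨1/2, 1/2, by norm_num, by norm_num, by norm_num, rfl⟩, 0, fun _ => le_rfl, ?_⟩
    funext i; fin_cases i <;> norm_num
  have hy : ![0, 1/2, 6] ∈ P237 := by
    refine ⟨_, segment_subset_convexHull (x := ![0, 3, 0]) (y := ![0, 0, 7]) (by simp) (by simp)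
      ⟨1/6, 5/6, by norm_num, by norm_num, by norm_num, rfl⟩, ![0, 0, 1/6], ?_, ?_⟩
    · intro i; fin_cases i <;> norm_num
    · funext i; fin_cases i <;> norm_num
  exact ⟨_, hx, _, hy, by funext i; fin_cases i <;> norm_num [Lq]⟩

/-- the polyhedron `P = Conv((2,0,0),(0,3,0),(0,0,7)) + ℚ³_{≥0}` is not normal:
for some `e ≥ 1` there is a lattice point of `eP` which is not a sum of `e` lattice points
of `P` (equivalently, some power of the integrally closed monomial ideal `I[P]` of `k[x,y,z]`
is not integrally closed). -/
theorem statement14 :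
    ¬ (∀ e : ℕ, 1 ≤ e → ∀ m : Fin 3 → ℤ,
        Lq m ∈ mink octant P237 e →
          ∃ f : Fin e → (Fin 3 → ℤ), (∀ i, Lq (f i) ∈ P237) ∧ m = ∑ i, f i) := by
  intro h
  obtain ⟨f, hf, hsum⟩ := h 2 one_le_two _ Lq_126_mem_mink_two
  exact not_exists_lattice_add_eq_126 ⟨f 0, f 1, hf 0, hf 1, by rw [hsum, Fin.sum_univ_two]⟩

end Paper
end
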